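/- arXiv:2508.20713 — 10 statements merged into one kernel-verified Lean document; each statement's English description precedes it below -/
import Mathlib

section
/- Let M ≥ 1. If ⁅H, Q (2m+1)⁆ = 0 holds for all m with 1 ≤ m ≤ M, then ⁅Q (k+1), Q (l+1)⁆ = 0 holds for all k, l ≥ 1 with k + l ≤ 2M + 2. (Lemma 1 of the paper.) -/
/-!
Since `ad B` is a derivation, `⁅Q (a+1), Q b⁆ + ⁅Q a, Q (b+1)⁆ = ⁅B, ⁅Q a, Q b⁆⁆`. Inducting on
the index sum, once all brackets of sum `n` vanish, the brackets of sum `n + 1` alternate in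
sign along the antidiagonal, so they all equal `±⁅Q 2, Q (n - 1)⁆`. For `n - 1` odd this
endpoint vanishes by hypothesis; for `n - 1` even the antidiagonal passes through the diagonal
bracket `⁅Q m, Q m⁆ = 0`.
-/

namespace PropertyBoost

variable {L : Type*} [LieRing L]

def BracketsVanishOnSum (Q : ℕ → L) (n : ℕ) : Prop :=
  ∀ a b, 2 ≤ a → 2 ≤ b → a + b = n → ⁅Q a, Q b⁆ = 0

variable {B : L} {Q : ℕ → L} (hQrec : ∀ n, 2 ≤ n → Q (n + 1) = ⁅B, Q n⁆)
include hQrec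

theorem lie_succ_left {a b : ℕ} (ha : 2 ≤ a) (hb : 2 ≤ b) :
    ⁅Q (a + 1), Q b⁆ = ⁅B, ⁅Q a, Q b⁆⁆ - ⁅Q a, Q (b + 1)⁆ := by
  rw [hQrec a ha, hQrec b hb, lie_lie]

theorem lie_eq_neg_one_pow_smul_lie_two {t : ℕ} (hvan : BracketsVanishOnSum Q (t + 1)) :
    ∀ j b, 2 ≤ b → j + b = t → ⁅Q (j + 2), Q b⁆ = (-1 : ℤ) ^ j • ⁅Q 2, Q t⁆ := by
  intro j
  induction j with
  | zero =>
    intro b _ hsum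
    simp [← hsum]
  | succ j ih =>
    intro b hb hsum
    have hzero : ⁅Q (j + 2), Q b⁆ = 0 := hvan _ _ (by omega) hb (by omega)
    rw [show j + 1 + 2 = j + 2 + 1 by ring, lie_succ_left hQrec (by omega) hb, hzero, lie_zero,
      zero_sub, ih (b + 1) (by omega) (by omega), pow_succ, mul_neg_one, neg_smul]

theorem lie_two_eq_zero_of_even {m : ℕ} (hm : 1 ≤ m)
    (hvan : BracketsVanishOnSum Q (2 * m + 1)) : ⁅Q 2, Q (2 * m)⁆ = 0 := by
  have hdiag := lie_eq_neg_one_pow_smul_lie_two hQrec hvan (m - 1) (m + 1) (by omega) (by omega)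
  rw [show m - 1 + 2 = m + 1 by omega, lie_self] at hdiag
  rcases neg_one_pow_eq_or ℤ (m - 1) with hsign | hsign
  · rw [hsign, one_smul] at hdiag
    exact hdiag.symm
  · rw [hsign, neg_one_smul, eq_comm, neg_eq_zero] at hdiag
    exact hdiag

theorem bracketsVanishOnSum_add_two {t : ℕ} (hvan : BracketsVanishOnSum Q (t + 1))
    (hend : ⁅Q 2, Q t⁆ = 0) : BracketsVanishOnSum Q (t + 2) := by
  intro a b ha hb hsum
  have := lie_eq_neg_one_pow_smul_lie_two hQrec hvan (a - 2) b hb (by omega)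
  rwa [show a - 2 + 2 = a by omega, hend, smul_zero] at this

theorem bracketsVanishOnSum_of_le {M : ℕ}
    (hodd : ∀ m, 1 ≤ m → m ≤ M → ⁅Q 2, Q (2 * m + 1)⁆ = 0) :
    ∀ t ≤ 2 * M + 2, BracketsVanishOnSum Q (t + 2) := by
  intro t
  induction t with
  | zero =>
    intro _ a b ha hb hsum
    omega
  | succ t ih =>
    intro ht
    have hvan : BracketsVanishOnSum Q (t + 1 + 1) := ih (by omega)
    rcases t.even_or_odd' with ⟨m, rfl | rfl⟩
    · rcases Nat.eq_zero_or_pos m with rfl | hm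
      · intro a b ha hb hsum
        omega
      · exact bracketsVanishOnSum_add_two hQrec hvan (hodd m hm (by omega))
    · refine bracketsVanishOnSum_add_two hQrec hvan ?_
      rw [show 2 * m + 1 + 1 = 2 * (m + 1) by ring]
      exact lie_two_eq_zero_of_even hQrec (by omega) hvan

end PropertyBoost

open PropertyBoost in
theorem property_boost_general {L : Type*} [LieRing L] (B H : L)
    (Q : ℕ → L) (hQ2 : Q 2 = H)
    (hQrec : ∀ n, 2 ≤ n → Q (n + 1) = ⁅B, Q n⁆)
    (M : ℕ)
    (h : ∀ m, 1 ≤ m → m ≤ M → ⁅H, Q (2 * m + 1)⁆ = 0) :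
    ∀ k l, 1 ≤ k → 1 ≤ l → k + l ≤ 2 * M + 2 → ⁅Q (k + 1), Q (l + 1)⁆ = 0 := by
  intro k l hk hl hsum
  subst hQ2
  exact bracketsVanishOnSum_of_le hQrec h (k + l) hsum _ _ (by omega) (by omega) (by omega)

/-- Lemma 1 of the paper: In a Lie ring `L`, with `Q 2 = H` and
`Q (n+1) = ⁅B, Q n⁆` for `n ≥ 2`, if `⁅H, Q (2m+1)⁆ = 0` for all `1 ≤ m ≤ M`,
then `⁅Q (k+1), Q (l+1)⁆ = 0` for all `k, l ≥ 1` with `k + l ≤ 2M + 2`. -/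
theorem property_boost {L : Type*} [LieRing L] (B H : L)
    (Q : ℕ → L) (hQ2 : Q 2 = H)
    (hQrec : ∀ n, 2 ≤ n → Q (n + 1) = ⁅B, Q n⁆)
    (M : ℕ) (hM : 1 ≤ M)
    (h : ∀ m, 1 ≤ m → m ≤ M → ⁅H, Q (2 * m + 1)⁆ = 0) :
    ∀ k l, 1 ≤ k → 1 ≤ l → k + l ≤ 2 * M + 2 → ⁅Q (k + 1), Q (l + 1)⁆ = 0 :=
  property_boost_general B H Q hQ2 hQrec M h
end

section
/- Let H be a Hermitian n×n complex matrix and A an arbitrary n×n complex matrix. If [H, [H, A]] = 0, then [H, A] = 0. (Finite-dimensional form of Lemma 3 of the paper, proved via the Hilbert–Schmidt norm.) -/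
/-!
Write `C = [H, A]`. Since `H` is Hermitian, `Cᴴ = [Aᴴ, H]`, and cyclicity of the trace gives
`tr (Cᴴ C) = tr (Aᴴ [H, C])`. So `[H, C] = 0` forces the Hilbert–Schmidt norm `tr (Cᴴ C)` of `C`
to vanish, i.e. `C = 0`.
-/

namespace Matrix

variable {n R : Type*} [Fintype n]

theorem trace_conjTranspose_commutator_mul_commutator [CommRing R] [StarRing R]
    {H : Matrix n n R} (hH : H.IsHermitian) (A : Matrix n n R) :
    ((H * A - A * H)ᴴ * (H * A - A * H)).trace =
      (Aᴴ * (H * (H * A - A * H) - (H * A - A * H) * H)).trace := by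
  set C := H * A - A * H
  have hC : Cᴴ = Aᴴ * H - H * Aᴴ := by
    simp only [C, conjTranspose_sub, conjTranspose_mul, hH.eq]
  clear_value C
  rw [hC, sub_mul, mul_sub, trace_sub, trace_sub, mul_assoc, mul_assoc, trace_mul_comm H,
    mul_assoc]

theorem commutator_eq_zero_of_commutator_commutator_eq_zero [CommRing R] [PartialOrder R]
    [StarRing R] [StarOrderedRing R] [NoZeroDivisors R] {H A : Matrix n n R} (hH : H.IsHermitian)
    (h : H * (H * A - A * H) - (H * A - A * H) * H = 0) :
    H * A - A * H = 0 := by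
  rw [← trace_conjTranspose_mul_self_eq_zero_iff, trace_conjTranspose_commutator_mul_commutator hH,
    h, mul_zero, trace_zero]

end Matrix

theorem double_commutator_vanishing_general {n : ℕ}
    (H A : Matrix (Fin n) (Fin n) ℂ) (hH : H.IsHermitian)
    (h : H * (H * A - A * H) - (H * A - A * H) * H = 0) :
    H * A - A * H = 0 := by
  open scoped ComplexOrder in
  exact Matrix.commutator_eq_zero_of_commutator_commutator_eq_zero hH h

/-- finite-dimensional Lemma 3 of the paper: For a Hermitian
matrix `H` and an arbitrary matrix `A`, `[H, [H, A]] = 0` implies `[H, A] = 0`. -/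
theorem double_commutator_vanishing {n : ℕ} (hn : 1 ≤ n)
    (H A : Matrix (Fin n) (Fin n) ℂ) (hH : H.IsHermitian)
    (h : H * (H * A - A * H) - (H * A - A * H) * H = 0) :
    H * A - A * H = 0 :=
  double_commutator_vanishing_general H A hH h
end

section
/- Let M ≥ 1. If ⁅Φ, P (2m)⁆ = 0 holds for all m with 1 ≤ m ≤ M, then ⁅Φ, ⁅Φ, P (2M+2)⁆⁆ = 0. (The key lemma of the Supplemental Material's rigorous proof.) -/
/-!
Since `ad_B` is a derivation, `⁅P i, P j⁆ = 0` forces `⁅P (i+1), P j⁆ = -⁅P i, P (j+1)⁆`.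
By induction on the level `i + j`, once all lower levels vanish the brackets on one level agree
up to sign, so a level vanishes as soon as one of its brackets does: `⁅P t, P t⁆` on an even
level `2t`, the hypothesis `⁅P 1, P (2m)⁆ = 0` on an odd level `2m + 1`. Thus `⁅P i, P j⁆ = 0`
whenever `i + j ≤ 2M + 2`, and then `⁅Φ, ⁅Φ, P (2M+2)⁆⁆ = -⁅P 1, ⁅P 2, P (2M+1)⁆⁆` vanishes by
the Jacobi identity.
-/

theorem eq_zero_iff_of_eq_neg_succ {G : Type*} [SubtractionMonoid G] {f : ℕ → G} {lo hi : ℕ}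
    (hf : ∀ a, lo ≤ a → a < hi → f (a + 1) = -f a) {a : ℕ} (hlo : lo ≤ a) (hhi : a ≤ hi) :
    f a = 0 ↔ f lo = 0 := by
  induction a, hlo using Nat.le_induction with
  | base => rfl
  | succ a ha ih => rw [hf a ha (by omega), neg_eq_zero]; exact ih (by omega)

section LieRing

variable {L : Type*} [LieRing L]

theorem lie_lie_left_eq_neg_of_lie_eq_zero {x y : L} (B : L) (h : ⁅x, y⁆ = 0) :
    ⁅⁅B, x⁆, y⁆ = -⁅x, ⁅B, y⁆⁆ := by
  rw [lie_lie, h, lie_zero, zero_sub]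

theorem lie_lie_eq_zero_of_lie_eq_zero {x y z : L} (hy : ⁅x, y⁆ = 0) (hz : ⁅x, z⁆ = 0) :
    ⁅x, ⁅y, z⁆⁆ = 0 := by
  rw [leibniz_lie, hy, hz, zero_lie, lie_zero, add_zero]

variable {B : L} {P : ℕ → L} (hP : ∀ n, 1 ≤ n → P (n + 1) = ⁅B, P n⁆)
include hP

theorem lie_succ_left_eq_neg {i j : ℕ} (hi : 1 ≤ i) (hj : 1 ≤ j) (h : ⁅P i, P j⁆ = 0) :
    ⁅P (i + 1), P j⁆ = -⁅P i, P (j + 1)⁆ := by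
  rw [hP i hi, hP j hj]
  exact lie_lie_left_eq_neg_of_lie_eq_zero B h

theorem lie_eq_zero_iff_of_lower_level {s : ℕ}
    (hlow : ∀ i j, 1 ≤ i → 1 ≤ j → i + j < s → ⁅P i, P j⁆ = 0) {a : ℕ} (ha : 1 ≤ a)
    (has : a < s) : ⁅P a, P (s - a)⁆ = 0 ↔ ⁅P 1, P (s - 1)⁆ = 0 := by
  refine eq_zero_iff_of_eq_neg_succ (f := fun a ↦ ⁅P a, P (s - a)⁆) (hi := s - 1)
    (fun b hb hbs ↦ ?_) ha (by omega)
  have hsucc : s - b = s - (b + 1) + 1 := by omega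
  simp only [hsucc]
  exact lie_succ_left_eq_neg hP hb (by omega) (hlow _ _ hb (by omega) (by omega))

theorem lie_eq_zero_of_add_le {M : ℕ} (h : ∀ m, 1 ≤ m → m ≤ M → ⁅P 1, P (2 * m)⁆ = 0)
    {i j : ℕ} (hi : 1 ≤ i) (hj : 1 ≤ j) (hij : i + j ≤ 2 * M + 2) : ⁅P i, P j⁆ = 0 := by
  induction hs : i + j using Nat.strong_induction_on generalizing i j with
  | _ s ih =>
  have hlow : ∀ i j, 1 ≤ i → 1 ≤ j → i + j < s → ⁅P i, P j⁆ = 0 :=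
    fun i j hi hj hlt ↦ ih (i + j) hlt hi hj (by omega) rfl
  rw [show j = s - i by omega, lie_eq_zero_iff_of_lower_level hP hlow hi (by omega)]
  rcases Nat.even_or_odd' s with ⟨t, rfl | rfl⟩
  · have hmid : ⁅P t, P (2 * t - t)⁆ = 0 := by
      rw [show 2 * t - t = t by omega, lie_self]
    exact (lie_eq_zero_iff_of_lower_level hP hlow (by omega) (by omega)).mp hmid
  · simpa using h t (by omega) (by omega)

end LieRing

/-- key lemma of the Supplemental Material: In a Lie ring `L`,
with `P 1 = Φ` and `P (n+1) = ⁅B, P n⁆` for `n ≥ 1`, if `⁅Φ, P (2m)⁆ = 0` for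
all `1 ≤ m ≤ M`, then `⁅Φ, ⁅Φ, P (2M+2)⁆⁆ = 0`. -/
theorem double_commutator_key_lemma {L : Type*} [LieRing L] (B Φ : L)
    (P : ℕ → L) (hP1 : P 1 = Φ)
    (hPrec : ∀ n, 1 ≤ n → P (n + 1) = ⁅B, P n⁆)
    (M : ℕ) (hM : 1 ≤ M)
    (h : ∀ m, 1 ≤ m → m ≤ M → ⁅Φ, P (2 * m)⁆ = 0) :
    ⁅Φ, ⁅Φ, P (2 * M + 2)⁆⁆ = 0 := by
  subst hP1
  have h12 : ⁅P 1, P 2⁆ = 0 := lie_eq_zero_of_add_le hPrec h le_rfl (by omega) (by omega)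
  have h1top : ⁅P 1, P (2 * M + 1)⁆ = 0 :=
    lie_eq_zero_of_add_le hPrec h le_rfl (by omega) (by omega)
  have hswap : ⁅P 1, P (2 * M + 2)⁆ = -⁅P 2, P (2 * M + 1)⁆ := by
    rw [lie_succ_left_eq_neg hPrec le_rfl (by omega) h1top, neg_neg]
  rw [hswap, lie_neg, lie_lie_eq_zero_of_lie_eq_zero h12 h1top, neg_zero]
end

section
/- Let D : L → L be an additive map that is a derivation of the bracket, i.e. D⁅x,y⁆ = ⁅Dx, y⁆ + ⁅x, Dy⁆ for all x, y ∈ L. Given H ∈ L, define Q : ℕ → L by Q 2 = H and Q (n+1) = D (Q n) for n ≥ 2. Let M ≥ 1. If ⁅H, Q (2m+1)⁆ = 0 holds for all m with 1 ≤ m ≤ M, then ⁅Q (k+1), Q (l+1)⁆ = 0 holds for all k, l ≥ 1 with k + l ≤ 2M + 2. (The derivation generalization of Lemma 1, which the paper uses for its theorem on parametrized Hamiltonians, whose proof only uses that the boost map satisfies the Jacobi/Leibniz identity.) -/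
/-!
Write `xᵢ = Dⁱ H`. If all brackets `⁅xᵢ, xⱼ⁆` on the antidiagonal `i + j = n` vanish, applying
the Leibniz rule to them gives `⁅xᵢ₊₁, xⱼ⁆ = -⁅xᵢ, xⱼ₊₁⁆`, so along the next antidiagonal
`⁅xᵢ, xⱼ⁆ = (-1)ⁱ ⁅x₀, xₙ₊₁⁆`. This anchor vanishes by hypothesis when `n + 1` is odd, and when
`n + 1 = 2m` is even because `⁅xₘ, xₘ⁆ = 0`. Induction on `n` then kills every antidiagonal.
-/

namespace LieDerivation

variable {L : Type*} [LieRing L]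

def ofAddMonoidHom (D : L →+ L) (hder : ∀ x y, D ⁅x, y⁆ = ⁅D x, y⁆ + ⁅x, D y⁆) :
    LieDerivation ℤ L L where
  toLinearMap := D.toIntLinearMap
  leibniz' a b := by
    rw [AddMonoidHom.coe_toIntLinearMap, hder, add_comm, sub_eq_add_neg, lie_skew]

variable {R : Type*} [CommRing R] [LieAlgebra R L] (D : LieDerivation R L L)

theorem lie_apply_eq_neg_of_lie_eq_zero {a b : L} (h : ⁅a, b⁆ = 0) :
    ⁅D a, b⁆ = -⁅a, D b⁆ := by
  have hsum := D.apply_lie_eq_add a b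
  rw [h, map_zero] at hsum
  exact (add_eq_zero_iff_neg_eq.mp hsum.symm).symm

variable (x : L)

theorem lie_iterate_eq_neg_one_pow_smul {n : ℕ}
    (hdiag : ∀ i j, i + j = n → ⁅D^[i] x, D^[j] x⁆ = 0) :
    ∀ i j, i + j = n + 1 → ⁅D^[i] x, D^[j] x⁆ = (-1 : ℤ) ^ i • ⁅x, D^[n + 1] x⁆ := by
  intro i
  induction i with
  | zero => intro j hj; rw [zero_add] at hj; simp [hj]
  | succ i ih =>
    intro j hij
    have hswap := D.lie_apply_eq_neg_of_lie_eq_zero (hdiag i j (by omega))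
    rw [Function.iterate_succ_apply', hswap, ← Function.iterate_succ_apply' D j,
      ih (j + 1) (by omega), pow_succ, mul_neg_one, neg_smul]

theorem lie_iterate_succ_eq_zero_of_even {n m : ℕ}
    (hdiag : ∀ i j, i + j = n → ⁅D^[i] x, D^[j] x⁆ = 0) (hm : n + 1 = m + m) :
    ⁅x, D^[n + 1] x⁆ = 0 := by
  have hmid := D.lie_iterate_eq_neg_one_pow_smul x hdiag m m hm.symm
  rw [lie_self, eq_comm] at hmid
  rcases neg_one_pow_eq_or ℤ m with hsign | hsign <;> rw [hsign] at hmid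
  · rwa [one_smul] at hmid
  · rwa [neg_smul, one_smul, neg_eq_zero] at hmid

theorem lie_iterate_eq_zero_of_lie_iterate_odd_eq_zero (N : ℕ)
    (hodd : ∀ n ≤ N, Odd n → ⁅x, D^[n] x⁆ = 0) {i j : ℕ} (hij : i + j ≤ N) :
    ⁅D^[i] x, D^[j] x⁆ = 0 := by
  suffices ∀ n ≤ N, ∀ i j, i + j = n → ⁅D^[i] x, D^[j] x⁆ = 0 from this _ hij i j rfl
  intro n
  induction n with
  | zero =>
    intro _ i j hij
    obtain ⟨rfl, rfl⟩ : i = 0 ∧ j = 0 := by omega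
    exact lie_self x
  | succ n ih =>
    intro hn
    have hdiag := ih (by omega)
    have hanchor : ⁅x, D^[n + 1] x⁆ = 0 := by
      rcases Nat.even_or_odd (n + 1) with ⟨m, hm⟩ | hodd'
      · exact D.lie_iterate_succ_eq_zero_of_even x hdiag hm
      · exact hodd _ hn hodd'
    intro i j hij
    rw [D.lie_iterate_eq_neg_one_pow_smul x hdiag i j hij, hanchor, smul_zero]

end LieDerivation

theorem property_boost_derivation_general {L : Type*} [LieRing L] (D : L → L)
    (hadd : ∀ x y, D (x + y) = D x + D y)
    (hder : ∀ x y, D ⁅x, y⁆ = ⁅D x, y⁆ + ⁅x, D y⁆)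
    (H : L) (Q : ℕ → L) (hQ2 : Q 2 = H)
    (hQrec : ∀ n, 2 ≤ n → Q (n + 1) = D (Q n))
    (M : ℕ)
    (h : ∀ m, 1 ≤ m → m ≤ M → ⁅H, Q (2 * m + 1)⁆ = 0) :
    ∀ k l, 1 ≤ k → 1 ≤ l → k + l ≤ 2 * M + 2 → ⁅Q (k + 1), Q (l + 1)⁆ = 0 := by
  let D' := LieDerivation.ofAddMonoidHom (AddMonoidHom.mk' D hadd) hder
  have hQ : ∀ n, Q (n + 2) = D'^[n] H := by
    intro n
    induction n with
    | zero => exact hQ2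
    | succ n ih => rw [Function.iterate_succ_apply', ← ih]; exact hQrec (n + 2) (by omega)
  have hodd : ∀ n ≤ 2 * M, Odd n → ⁅H, D'^[n] H⁆ = 0 := by
    rintro _ hn ⟨m, rfl⟩
    rw [← hQ]
    exact h (m + 1) (by omega) (by omega)
  intro k l hk hl hkl
  obtain ⟨i, rfl⟩ : ∃ i, k = i + 1 := ⟨k - 1, by omega⟩
  obtain ⟨j, rfl⟩ : ∃ j, l = j + 1 := ⟨l - 1, by omega⟩
  rw [hQ i, hQ j]
  exact D'.lie_iterate_eq_zero_of_lie_iterate_odd_eq_zero H (2 * M) hodd (by omega)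

/-- derivation generalization of Lemma 1: Let `D : L → L` be an
additive derivation of the bracket of a Lie ring `L`. With `Q 2 = H` and
`Q (n+1) = D (Q n)` for `n ≥ 2`, if `⁅H, Q (2m+1)⁆ = 0` for all `1 ≤ m ≤ M`,
then `⁅Q (k+1), Q (l+1)⁆ = 0` for all `k, l ≥ 1` with `k + l ≤ 2M + 2`. -/
theorem property_boost_derivation {L : Type*} [LieRing L] (D : L → L)
    (hadd : ∀ x y, D (x + y) = D x + D y)
    (hder : ∀ x y, D ⁅x, y⁆ = ⁅D x, y⁆ + ⁅x, D y⁆)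
    (H : L) (Q : ℕ → L) (hQ2 : Q 2 = H)
    (hQrec : ∀ n, 2 ≤ n → Q (n + 1) = D (Q n))
    (M : ℕ) (hM : 1 ≤ M)
    (h : ∀ m, 1 ≤ m → m ≤ M → ⁅H, Q (2 * m + 1)⁆ = 0) :
    ∀ k l, 1 ≤ k → 1 ≤ l → k + l ≤ 2 * M + 2 → ⁅Q (k + 1), Q (l + 1)⁆ = 0 :=
  property_boost_derivation_general D hadd hder H Q hQ2 hQrec M h
end

section
/- Let B, H be elements of L. If ⁅H, ⁅B, H⁆⁆ = 0, then ⁅H, ⁅B, ⁅B, H⁆⁆⁆ = 0; that is, if the third charge Q3 = ⁅B, H⁆ commutes with H, then so does the fourth charge Q4 = ⁅B, Q3⁆. (Equation (7)–(9) of the paper, the base case of Lemma 1.) -/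
/-- The Leibniz rule leaves the extra term `⁅⁅x, y⁆, ⁅y, x⁆⁆`, which vanishes by antisymmetry. -/
theorem lie_lie_lie_swap_self {L : Type*} [LieRing L] (x y : L) :
    ⁅x, ⁅y, ⁅y, x⁆⁆⁆ = ⁅y, ⁅x, ⁅y, x⁆⁆⁆ := by
  rw [leibniz_lie, add_eq_right, ← lie_skew x y, neg_lie, lie_self, neg_zero]

/-- Eqs. (7)-(9) of the paper, base case of Lemma 1: In a Lie
ring `L`, if `⁅H, ⁅B, H⁆⁆ = 0` then `⁅H, ⁅B, ⁅B, H⁆⁆⁆ = 0`. -/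
theorem third_implies_fourth {L : Type*} [LieRing L] (B H : L)
    (h : ⁅H, ⁅B, H⁆⁆ = 0) :
    ⁅H, ⁅B, ⁅B, H⁆⁆⁆ = 0 := by
  rw [lie_lie_lie_swap_self, h, lie_zero]
end

section
/- Let H be a Hermitian n×n complex matrix and let B, A be arbitrary n×n complex matrices. If [H, [B, H]] = 0 and [H, A] = 0, then [H, [B, A]] = 0. In other words, for a Hermitian H satisfying the Reshetikhin condition, the commutator with the boost B maps matrices commuting with H to matrices commuting with H. (The inductive step in the finite-dimensional proof of the paper's main theorem, combining Lemmas 2 and 3.) -/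
/-!
If `H` is Hermitian and commutes with `C = [B, H]`, then `Cᴴ = [H, Bᴴ]`, so
`tr (C Cᴴ) = tr ([C, H] Bᴴ) = 0` by cyclicity of the trace; positivity of `tr (C Cᴴ)` forces
`C = 0`. Thus `B` and `A` both commute with `H`, and so does `[B, A]`.
-/

open scoped ComplexOrder

namespace Matrix

variable {n R : Type*} [Fintype n] [CommRing R] [PartialOrder R] [StarRing R]
  [StarOrderedRing R] [NoZeroDivisors R]

theorem IsHermitian.commute_of_commute_commutator {H B : Matrix n n R} (hH : H.IsHermitian)
    (h : Commute H (B * H - H * B)) : Commute B H := by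
  set C := B * H - H * B
  have hCstar : Cᴴ = H * Bᴴ - Bᴴ * H := by
    simp only [C, conjTranspose_sub, conjTranspose_mul, hH.eq]
  have htrace : (C * Cᴴ).trace = 0 := by
    rw [hCstar, Matrix.mul_sub, trace_sub, ← Matrix.mul_assoc, ← h.eq, Matrix.mul_assoc,
      trace_mul_comm H, ← Matrix.mul_assoc, sub_self]
  exact sub_eq_zero.mp (trace_mul_conjTranspose_self_eq_zero_iff.mp htrace)

end Matrix

theorem boost_preserves_conservation_general {n : ℕ}
    (H B A : Matrix (Fin n) (Fin n) ℂ) (hH : H.IsHermitian)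
    (hRes : H * (B * H - H * B) - (B * H - H * B) * H = 0)
    (hA : H * A - A * H = 0) :
    H * (B * A - A * B) - (B * A - A * B) * H = 0 := by
  have hHB : Commute H B := (hH.commute_of_commute_commutator (sub_eq_zero.mp hRes)).symm
  have hHA : Commute H A := sub_eq_zero.mp hA
  exact sub_eq_zero.mpr ((hHB.mul_right hHA).sub_right (hHA.mul_right hHB))

/-- inductive step of the finite-dimensional main theorem: For
a Hermitian matrix `H` and arbitrary matrices `B`, `A`, if `[H, [B, H]] = 0`
and `[H, A] = 0`, then `[H, [B, A]] = 0`. -/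
theorem boost_preserves_conservation {n : ℕ} (hn : 1 ≤ n)
    (H B A : Matrix (Fin n) (Fin n) ℂ) (hH : H.IsHermitian)
    (hRes : H * (B * H - H * B) - (B * H - H * B) * H = 0)
    (hA : H * A - A * H = 0) :
    H * (B * A - A * B) - (B * A - A * B) * H = 0 :=
  boost_preserves_conservation_general H B A hH hRes hA
end

section
/- Let U ⊆ ℝ^D (D ≥ 1) be open, and let H : ℝ^D → M, B : ℝ^D → M and v : ℝ^D → ℝ^D be infinitely differentiable functions such that H(λ) is Hermitian for every λ ∈ U. Define Q : ℕ → (ℝ^D → M) recursively by Q 2 = H and Q (k+1)(λ) = [B(λ), (Q k)(λ)] + (fderiv of Q k at λ)(v(λ)) for k ≥ 2. If [H(λ), (Q 3)(λ)] = 0 for every λ ∈ U (the generalized Reshetikhin condition), then for every k ≥ 2 and every λ ∈ U one has [H(λ), (Q k)(λ)] = 0, and moreover [(Q k)(λ), (Q l)(λ)] = 0 for all k, l ≥ 2 and all λ ∈ U. (The finite-dimensional form of the paper's theorem on parametrized Hamiltonians.) -/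
attribute [local instance] Matrix.normedAddCommGroup Matrix.normedSpace
attribute [-instance] instTopologicalSpaceMatrix Matrix.instUniformSpace

open scoped Matrix

/-- If `H` is Hermitian and commutes with `[H, A]`, then `[H, A] = 0`. -/
lemma herm_comm_cancel {n : ℕ} {Hm A : Matrix (Fin n) (Fin n) ℂ} (hH : Hm.IsHermitian)
    (h : Hm * (Hm * A - A * Hm) - (Hm * A - A * Hm) * Hm = 0) :
    Hm * A - A * Hm = 0 := by
  set Cm := Hm * A - A * Hm with hC
  have hHC : Hm * Cm = Cm * Hm := sub_eq_zero.mp h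
  have hCH : Cmᴴ * Hm = Hm * Cmᴴ := by
    have := congrArg Matrix.conjTranspose hHC
    simpa [Matrix.conjTranspose_mul, hH.eq] using this
  have htr : Matrix.trace (Cmᴴ * Cm) = 0 := by
    have h1 : Cmᴴ * Cm = Cmᴴ * (Hm * A) - Cmᴴ * (A * Hm) := by rw [hC]; noncomm_ring
    have h2 : Matrix.trace (Cmᴴ * (A * Hm)) = Matrix.trace (Cmᴴ * (Hm * A)) := by
      calc Matrix.trace (Cmᴴ * (A * Hm)) = Matrix.trace ((Cmᴴ * A) * Hm) := by rw [mul_assoc]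
        _ = Matrix.trace (Hm * (Cmᴴ * A)) := by rw [Matrix.trace_mul_comm]
        _ = Matrix.trace ((Hm * Cmᴴ) * A) := by rw [mul_assoc]
        _ = Matrix.trace ((Cmᴴ * Hm) * A) := by rw [hCH]
        _ = Matrix.trace (Cmᴴ * (Hm * A)) := by rw [mul_assoc]
    rw [h1, Matrix.trace_sub, h2, sub_self]
  have hsum : (↑(∑ j, ∑ i, Complex.normSq (Cm i j)) : ℂ) = 0 := by
    rw [← htr]
    simp only [Matrix.trace, Matrix.diag, Matrix.mul_apply, Matrix.conjTranspose_apply]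
    push_cast
    congr 1; ext j; congr 1; ext i
    rw [Complex.normSq_eq_conj_mul_self]; rfl
  have hsum' : (∑ j, ∑ i, Complex.normSq (Cm i j)) = 0 := by exact_mod_cast hsum
  ext i j
  have hj := (Finset.sum_eq_zero_iff_of_nonneg (fun j _ => Finset.sum_nonneg
      (fun i _ => Complex.normSq_nonneg _))).mp hsum' j (Finset.mem_univ j)
  have hi := (Finset.sum_eq_zero_iff_of_nonneg (fun i _ => Complex.normSq_nonneg _)).mp
      hj i (Finset.mem_univ i)
  simpa using Complex.normSq_eq_zero.mp hi

/-- Matrix multiplication as a continuous ℝ-bilinear map. -/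
noncomputable def mulL (n : ℕ) : Matrix (Fin n) (Fin n) ℂ →L[ℝ] Matrix (Fin n) (Fin n) ℂ →L[ℝ]
    Matrix (Fin n) (Fin n) ℂ :=
  LinearMap.toContinuousLinearMap
  { toFun := fun A => LinearMap.toContinuousLinearMap (LinearMap.mul ℝ _ A)
    map_add' := fun A B => by ext X; simp [add_mul]
    map_smul' := fun c A => by ext X; simp [smul_mul_assoc] }

@[simp] lemma mulL_apply {n : ℕ} (A B : Matrix (Fin n) (Fin n) ℂ) : mulL n A B = A * B := rfl

lemma hasFDerivAt_matmul {D n : ℕ} {f g : (Fin D → ℝ) → Matrix (Fin n) (Fin n) ℂ}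
    {f' g' : (Fin D → ℝ) →L[ℝ] Matrix (Fin n) (Fin n) ℂ} {x : Fin D → ℝ}
    (hf : HasFDerivAt f f' x) (hg : HasFDerivAt g g' x) :
    HasFDerivAt (fun l => f l * g l)
      ((mulL n (f x)).comp g' + ((mulL n).comp f').flip (g x)) x := by
  have hc : HasFDerivAt (fun l => mulL n (f l)) ((mulL n).comp f') x :=
    (mulL n).hasFDerivAt.comp x hf
  exact hc.clm_apply hg

attribute [instance] instTopologicalSpaceMatrix Matrix.instUniformSpace

lemma fderiv_matmul_apply {D n : ℕ} {f g : (Fin D → ℝ) → Matrix (Fin n) (Fin n) ℂ}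
    {x : Fin D → ℝ}
    (hf : DifferentiableAt ℝ f x) (hg : DifferentiableAt ℝ g x) (w : Fin D → ℝ) :
    fderiv ℝ (fun l => f l * g l) x w
      = fderiv ℝ f x w * g x + f x * fderiv ℝ g x w := by
  rw [show fderiv ℝ (fun l => f l * g l) x = _ from
    (hasFDerivAt_matmul hf.hasFDerivAt hg.hasFDerivAt).fderiv]
  simp [add_comm]
  rfl

lemma differentiableAt_matmul {D n : ℕ} {f g : (Fin D → ℝ) → Matrix (Fin n) (Fin n) ℂ}
    {x : Fin D → ℝ}
    (hf : DifferentiableAt ℝ f x) (hg : DifferentiableAt ℝ g x) :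
    DifferentiableAt ℝ (fun l => f l * g l) x :=
  (hasFDerivAt_matmul hf.hasFDerivAt hg.hasFDerivAt).differentiableAt

lemma contDiff_matmul {D n : ℕ} {f g : (Fin D → ℝ) → Matrix (Fin n) (Fin n) ℂ}
    (hf : ContDiff ℝ (⊤ : ℕ∞) f) (hg : ContDiff ℝ (⊤ : ℕ∞) g) :
    ContDiff ℝ (⊤ : ℕ∞) (fun l => f l * g l) :=
  (((mulL n).contDiff).comp hf).clm_apply hg

lemma alg_step1 {R : Type*} [Ring R] (h b q dh dq : R)
    (hq : h * q - q * h = 0)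
    (hder : (dh * q - q * dh) + (h * dq - dq * h) = 0)
    (hres : h * ((b * h - h * b) + dh) - ((b * h - h * b) + dh) * h = 0) :
    h * (h * ((b * q - q * b) + dq) - ((b * q - q * b) + dq) * h)
      - (h * ((b * q - q * b) + dq) - ((b * q - q * b) + dq) * h) * h = 0 := by
  have key : h * (h * ((b * q - q * b) + dq) - ((b * q - q * b) + dq) * h)
      - (h * ((b * q - q * b) + dq) - ((b * q - q * b) + dq) * h) * h
      = -((h * ((b * h - h * b) + dh) - ((b * h - h * b) + dh) * h) * q
            - q * (h * ((b * h - h * b) + dh) - ((b * h - h * b) + dh) * h))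
        + ((h * b - b * h) * (h * q - q * h) - (h * q - q * h) * (h * b - b * h))
        - (dh * (h * q - q * h) - (h * q - q * h) * dh)
        + (h * ((dh * q - q * dh) + (h * dq - dq * h))
            - ((dh * q - q * dh) + (h * dq - dq * h)) * h)
        + (h * (b * (h * q - q * h) - (h * q - q * h) * b)
            - (b * (h * q - q * h) - (h * q - q * h) * b) * h) := by
    noncomm_ring
  rw [key, hq, hder, hres]
  noncomm_ring

lemma alg_step2 {R : Type*} [Ring R] (b qj qk dqj dqk : R)
    (hjk : qj * qk - qk * qj = 0)
    (hder : (dqj * qk - qk * dqj) + (qj * dqk - dqk * qj) = 0)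
    (hjk1 : qj * ((b * qk - qk * b) + dqk) - ((b * qk - qk * b) + dqk) * qj = 0) :
    ((b * qj - qj * b) + dqj) * qk - qk * ((b * qj - qj * b) + dqj) = 0 := by
  have key : ((b * qj - qj * b) + dqj) * qk - qk * ((b * qj - qj * b) + dqj)
      = (b * (qj * qk - qk * qj) - (qj * qk - qk * qj) * b)
        + ((dqj * qk - qk * dqj) + (qj * dqk - dqk * qj))
        - (qj * ((b * qk - qk * b) + dqk) - ((b * qk - qk * b) + dqk) * qj) := by
    noncomm_ring
  rw [key, hjk, hder, hjk1]
  noncomm_ring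


/-- finite-dimensional theorem on parametrized Hamiltonians:
Let `H, B : ℝ^D → M` and `v : ℝ^D → ℝ^D` be infinitely differentiable, with
`H(λ)` Hermitian on the open set `U`. Define `Q 2 = H` and
`Q (k+1)(λ) = [B(λ), Q k(λ)] + (fderiv (Q k) λ)(v(λ))` for `k ≥ 2`.
If the generalized Reshetikhin condition `[H(λ), Q 3(λ)] = 0` holds on `U`,
then `[H(λ), Q k(λ)] = 0` for all `k ≥ 2` and `λ ∈ U`, and
`[Q k(λ), Q l(λ)] = 0` for all `k, l ≥ 2` and `λ ∈ U`. -/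
theorem parametrized_reshetikhin_implies_integrability {D n : ℕ}
    (hD : 1 ≤ D) (hn : 1 ≤ n)
    (U : Set (Fin D → ℝ)) (hU : IsOpen U)
    (H B : (Fin D → ℝ) → Matrix (Fin n) (Fin n) ℂ)
    (v : (Fin D → ℝ) → (Fin D → ℝ))
    (hHsmooth : ContDiff ℝ (⊤ : ℕ∞) H) (hBsmooth : ContDiff ℝ (⊤ : ℕ∞) B)
    (hvsmooth : ContDiff ℝ (⊤ : ℕ∞) v)
    (hHherm : ∀ l ∈ U, (H l).IsHermitian)
    (Q : ℕ → (Fin D → ℝ) → Matrix (Fin n) (Fin n) ℂ)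
    (hQ2 : Q 2 = H)
    (hQrec : ∀ k, 2 ≤ k → ∀ l,
      Q (k + 1) l = (B l * Q k l - Q k l * B l) + fderiv ℝ (Q k) l (v l))
    (hRes : ∀ l ∈ U, H l * Q 3 l - Q 3 l * H l = 0) :
    (∀ k, 2 ≤ k → ∀ l ∈ U, H l * Q k l - Q k l * H l = 0) ∧
      (∀ k k', 2 ≤ k → 2 ≤ k' → ∀ l ∈ U,
        Q k l * Q k' l - Q k' l * Q k l = 0) := by
  -- smoothness of all the `Q k`
  have hQs : ∀ k, 2 ≤ k → ContDiff ℝ (⊤ : ℕ∞) (Q k) := by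
    intro k hk
    induction k, hk using Nat.le_induction with
    | base => rw [hQ2]; exact hHsmooth
    | succ k hk ih =>
      have heq : Q (k + 1) = fun l => (B l * Q k l - Q k l * B l) + fderiv ℝ (Q k) l (v l) :=
        funext (hQrec k hk)
      rw [heq]
      exact ((contDiff_matmul hBsmooth ih).sub (contDiff_matmul ih hBsmooth)).add
        ((ih.fderiv_right (by simp)).clm_apply hvsmooth)
  -- derivative of a vanishing commutator
  have dcz : ∀ f g : (Fin D → ℝ) → Matrix (Fin n) (Fin n) ℂ,
      ContDiff ℝ (⊤ : ℕ∞) f → ContDiff ℝ (⊤ : ℕ∞) g →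
      (∀ x ∈ U, f x * g x - g x * f x = 0) → ∀ l ∈ U,
      (fderiv ℝ f l (v l) * g l - g l * fderiv ℝ f l (v l))
        + (f l * fderiv ℝ g l (v l) - fderiv ℝ g l (v l) * f l) = 0 := by
    intro f g hf hg hc l hl
    have hfd : DifferentiableAt ℝ f l := (hf.differentiable (by simp)).differentiableAt
    have hgd : DifferentiableAt ℝ g l := (hg.differentiable (by simp)).differentiableAt
    have h1 : fderiv ℝ (fun x => f x * g x - g x * f x) l (v l) = 0 := by
      have hev : (fun x => f x * g x - g x * f x)
          =ᶠ[nhds l] (fun _ => (0 : Matrix (Fin n) (Fin n) ℂ)) :=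
        Filter.eventuallyEq_of_mem (hU.mem_nhds hl) hc
      rw [hev.fderiv_eq]
      simp
    rw [show fderiv ℝ (fun x => f x * g x - g x * f x) l
        = fderiv ℝ (fun x => f x * g x) l - fderiv ℝ (fun x => g x * f x) l from
      fderiv_fun_sub (differentiableAt_matmul hfd hgd) (differentiableAt_matmul hgd hfd)] at h1
    rw [ContinuousLinearMap.sub_apply, fderiv_matmul_apply hfd hgd,
      fderiv_matmul_apply hgd hfd] at h1
    calc (fderiv ℝ f l (v l) * g l - g l * fderiv ℝ f l (v l))
          + (f l * fderiv ℝ g l (v l) - fderiv ℝ g l (v l) * f l)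
        = (fderiv ℝ f l (v l) * g l + f l * fderiv ℝ g l (v l))
          - (fderiv ℝ g l (v l) * f l + g l * fderiv ℝ f l (v l)) := by abel
      _ = 0 := h1
  -- first induction : `[H, Q k] = 0` on `U`
  have hHQ : ∀ k, 2 ≤ k → ∀ l ∈ U, H l * Q k l - Q k l * H l = 0 := by
    intro k hk
    induction k, hk using Nat.le_induction with
    | base => intro l hl; rw [hQ2]; exact sub_self _
    | succ k hk ih =>
      intro l hl
      have hQk1 : Q (k + 1) l = (B l * Q k l - Q k l * B l) + fderiv ℝ (Q k) l (v l) :=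
        hQrec k hk l
      have hQ3 : Q 3 l = (B l * H l - H l * B l) + fderiv ℝ H l (v l) := by
        have h3 := hQrec 2 le_rfl l
        rw [hQ2] at h3
        exact h3
      have hres' : H l * ((B l * H l - H l * B l) + fderiv ℝ H l (v l))
          - ((B l * H l - H l * B l) + fderiv ℝ H l (v l)) * H l = 0 := by
        rw [← hQ3]; exact hRes l hl
      have hder := dcz H (Q k) hHsmooth (hQs k hk) ih l hl
      have hdc := alg_step1 (H l) (B l) (Q k l) (fderiv ℝ H l (v l))
        (fderiv ℝ (Q k) l (v l)) (ih l hl) hder hres'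
      rw [hQk1]
      exact herm_comm_cancel (hHherm l hl) hdc
  refine ⟨hHQ, ?_⟩
  -- second induction : `[Q j, Q k] = 0` on `U`
  have hT : ∀ j, 2 ≤ j → ∀ k, 2 ≤ k → ∀ l ∈ U, Q j l * Q k l - Q k l * Q j l = 0 := by
    intro j hj
    induction j, hj using Nat.le_induction with
    | base => intro k hk l hl; rw [hQ2]; exact hHQ k hk l hl
    | succ j hj ih =>
      intro k hk l hl
      have hder := dcz (Q j) (Q k) (hQs j hj) (hQs k hk) (fun x hx => ih k hk x hx) l hl
      have hjk1 : Q j l * Q (k + 1) l - Q (k + 1) l * Q j l = 0 := ih (k + 1) (by omega) l hl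
      rw [hQrec k hk l] at hjk1
      rw [hQrec j hj l]
      exact alg_step2 (B l) (Q j l) (Q k l) (fderiv ℝ (Q j) l (v l))
        (fderiv ℝ (Q k) l (v l)) (ih k hk l hl) hder hjk1
  exact fun k k' hk hk' => hT k hk k' hk'
end

section
/- Let A ⊆ ℤ be finite and nonempty with r(A) ≤ N, and let a = min A. Then s_{π(a)}(π(A)) = { x + π(a) − a : x ∈ A }, i.e. the cut at π(a) of the projection of A equals the translate of A by π(a) − a. (Lemma S-suppl-1 of the Supplemental Material.) -/
/-- `projN N i` is the unique element of `{1, …, N}` congruent to `i` mod `N`. -/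
def projN (N i : ℤ) : ℤ := (i - 1) % N + 1

/-- The cut `s_n` of the chain: `s_n i = i` if `i ≥ n`, and `i + N` if `i < n`. -/
def cutN (N n i : ℤ) : ℤ := if n ≤ i then i else i + N

/-- The range `r(A) = max A - min A + 1` of a finite nonempty set, with `r(∅) = 0`. -/
def rng (A : Finset ℤ) : ℤ := if h : A.Nonempty then A.max' h - A.min' h + 1 else 0

/-- `r_N(A) = min over n ∈ {1,…,N} of r(s_n(A))`. -/
noncomputable def rN (N : ℤ) (A : Finset ℤ) : ℤ :=
  sInf ((fun n => rng (A.image (cutN N n))) '' Set.Icc 1 N)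

/-!
Write `a = min A` and `p = π(a)`. Since `r(A) ≤ N`, every `x ∈ A` lies in `[a, a + N)`, so
`x + p - a` lies in `[p, p + N)`. The cut `s_p` maps `{1, …, N}` into `[p, p + N)`
without changing residues mod `N`, so `s_p(π(x))` is the element of `[p, p + N)` congruent to
`x`, and `x + p - a` is another one, as `p ≡ a`. An interval of length `N` contains only one
element of each residue class.
-/

namespace Int

theorem eq_of_modEq_of_mem_Ico {N n x y : ℤ} (hxy : x ≡ y [ZMOD N])
    (hx : x ∈ Set.Ico n (n + N)) (hy : y ∈ Set.Ico n (n + N)) : x = y := by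
  have hdvd : N ∣ y - x := hxy.dvd
  have hlt : |y - x| < N := abs_sub_lt_iff.mpr ⟨by linarith [hx.1, hy.2], by linarith [hx.2, hy.1]⟩
  linarith [eq_zero_of_abs_lt_dvd hdvd hlt]

end Int

theorem projN_modEq (N i : ℤ) : projN N i ≡ i [ZMOD N] := by
  have h := (Int.mod_modEq (i - 1) N).add_right 1
  rwa [sub_add_cancel] at h

theorem projN_mem_Icc {N : ℤ} (hN : 0 < N) (i : ℤ) : projN N i ∈ Set.Icc 1 N := by
  have h₀ := Int.emod_nonneg (i - 1) hN.ne'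
  have h₁ := Int.emod_lt_of_pos (i - 1) hN
  constructor <;> simp only [projN] <;> omega

theorem cutN_modEq (N n i : ℤ) : cutN N n i ≡ i [ZMOD N] := by
  unfold cutN
  split_ifs
  · rfl
  · exact Int.add_modEq_right

theorem cutN_mem_Ico {N n i : ℤ} (h₁ : n - N ≤ i) (h₂ : i < n + N) :
    cutN N n i ∈ Set.Ico n (n + N) := by
  unfold cutN
  split_ifs <;> constructor <;> omega

theorem cutN_projN_projN {N a x : ℤ} (hN : 0 < N) (hax : a ≤ x) (hxa : x < a + N) :
    cutN N (projN N a) (projN N x) = x + projN N a - a := by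
  obtain ⟨hp₁, hpN⟩ := projN_mem_Icc hN a
  obtain ⟨hx₁, hxN⟩ := projN_mem_Icc hN x
  apply Int.eq_of_modEq_of_mem_Ico (n := projN N a)
  · calc cutN N (projN N a) (projN N x) ≡ x [ZMOD N] :=
          (cutN_modEq _ _ _).trans (projN_modEq N x)
      _ = x + a - a := by ring
      _ ≡ x + projN N a - a [ZMOD N] := ((projN_modEq N a).symm.add_left x).sub_right a
  · exact cutN_mem_Ico (by omega) (by omega)
  · constructor <;> omega

theorem rng_eq_max'_sub_min' {A : Finset ℤ} (hA : A.Nonempty) :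
    rng A = A.max' hA - A.min' hA + 1 :=
  dif_pos hA

theorem cut_of_proj_eq_translate_general (N : ℤ)
    (A : Finset ℤ) (hA : A.Nonempty) (hr : rng A ≤ N) :
    (A.image (projN N)).image (cutN N (projN N (A.min' hA))) =
      A.image (fun x => x + projN N (A.min' hA) - A.min' hA) := by
  rw [Finset.image_image]
  refine Finset.image_congr fun x hx => ?_
  have hmin : A.min' hA ≤ x := A.min'_le x hx
  have hmax : x ≤ A.max' hA := A.le_max' x hx
  rw [rng_eq_max'_sub_min' hA] at hr
  exact cutN_projN_projN (by omega) hmin (by omega)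

/-- Lemma S1 of the Supplemental Material: If `A ⊆ ℤ` is finite
and nonempty with `r(A) ≤ N` and `a = min A`, then
`s_{π(a)}(π(A)) = A + π(a) − a`. -/
theorem cut_of_proj_eq_translate (N : ℤ) (hN : 1 ≤ N)
    (A : Finset ℤ) (hA : A.Nonempty) (hr : rng A ≤ N) :
    (A.image (projN N)).image (cutN N (projN N (A.min' hA))) =
      A.image (fun x => x + projN N (A.min' hA) - A.min' hA) :=
  cut_of_proj_eq_translate_general N A hA hr
end

section
/- Let B, B' ⊆ {1,…,N} satisfy 1 ≤ r_N(B) ≤ (N+1)/2, 1 ≤ r_N(B') ≤ (N+1)/2 and B ∩ B' ≠ ∅. Let b and b' denote the left-most sites of B and B', respectively. Then at least one of the following holds: (i) there exists n ∈ {0,1} with s_b(B') = { x + nN : x ∈ s_{b'}(B') }; (ii) there exists m ∈ {0,1} with s_{b'}(B) = { x + mN : x ∈ s_b(B) }. (Lemma S-suppl-2 of the Supplemental Material.) -/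
/-!
The cut at a left-most site lifts `B` into `[b, b + r - 1]` and `B'` into `[b', b' + r' - 1]`,
where `r = r_N(B)`, `r' = r_N(B')` and `r + r' ≤ N + 1`.
Say `b ≤ b'`. The two cuts `s_b` and `s_{b'}` only disagree on `[b, b')`. If `B'` misses `[b, b')`
then `s_b(B') = s_{b'}(B')`. Otherwise some `y ∈ B' ∩ [b, b')` is lifted to `y + N ≤ b' + r' - 1`, so the
window of `B'` reaches `b + N`; as the two windows are too short to overlap around the circle,
this forces `B ⊆ [b, b')`, on which `s_{b'} = s_b + N`.
-/

lemma projN_eq_self {N j : ℤ} (h1 : 1 ≤ j) (hN : j ≤ N) : projN N j = j := by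
  unfold projN
  rw [Int.emod_eq_of_lt (by omega) (by omega)]
  ring

lemma projN_add_self (N j : ℤ) : projN N (j + N) = projN N j := by
  simp only [projN, add_sub_right_comm, Int.add_emod_right]

lemma cutN_projN {N b j : ℤ} (hb1 : 1 ≤ b) (hbN : b ≤ N) (hbj : b ≤ j) (hjb : j < b + N) :
    cutN N b (projN N j) = j := by
  rcases le_or_gt j N with hjN | hNj
  · rw [projN_eq_self (by omega) hjN, cutN, if_pos hbj]
  · have hproj : projN N j = j - N :=
      calc projN N j = projN N (j - N + N) := by rw [sub_add_cancel]
        _ = j - N := by rw [projN_add_self, projN_eq_self (by omega) (by omega)]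
    rw [hproj, cutN, if_neg (by omega), sub_add_cancel]

lemma image_cutN_subset_Icc {N b r : ℤ} {A : Finset ℤ} (hb1 : 1 ≤ b) (hbN : b ≤ N) (hrN : r ≤ N)
    (hA : A ⊆ (Finset.Icc b (b + r - 1)).image (projN N)) :
    A.image (cutN N b) ⊆ Finset.Icc b (b + r - 1) := by
  intro z hz
  obtain ⟨x, hx, rfl⟩ := Finset.mem_image.mp hz
  obtain ⟨j, hj, rfl⟩ := Finset.mem_image.mp (hA hx)
  have hj' := Finset.mem_Icc.mp hj
  rwa [cutN_projN hb1 hbN hj'.1 (by omega)]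

lemma cutN_eq_cutN_of_notMem_Ico {N b b' x : ℤ} (hbb' : b ≤ b') (hx : x ∉ Set.Ico b b') :
    cutN N b x = cutN N b' x := by
  rw [Set.mem_Ico, not_and_or, not_le, not_lt] at hx
  unfold cutN
  split_ifs <;> omega

lemma cutN_eq_cutN_add_of_mem_Ico {N b b' x : ℤ} (hx : x ∈ Set.Ico b b') :
    cutN N b' x = cutN N b x + N := by
  rw [Set.mem_Ico] at hx
  unfold cutN
  split_ifs <;> omega

lemma image_cutN_eq_of_forall_notMem_Ico {N b b' : ℤ} {A : Finset ℤ} (hbb' : b ≤ b')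
    (hA : ∀ x ∈ A, x ∉ Set.Ico b b') :
    A.image (cutN N b) = A.image (cutN N b') :=
  Finset.image_congr fun x hx => cutN_eq_cutN_of_notMem_Ico hbb' (hA x hx)

lemma image_cutN_eq_image_add_of_subset_Ico {N b b' : ℤ} {A : Finset ℤ}
    (hA : (A : Set ℤ) ⊆ Set.Ico b b') :
    A.image (cutN N b') = (A.image (cutN N b)).image (· + N) := by
  rw [Finset.image_image]
  exact Finset.image_congr fun _ hx => cutN_eq_cutN_add_of_mem_Ico (hA hx)

lemma subset_Ico_of_window_wraps {N b b' r r' : ℤ} {B : Finset ℤ} (hB : B ⊆ Finset.Icc 1 N)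
    (hb'N : b' ≤ N) (hrr' : r + r' ≤ N + 1) (hBb : B.image (cutN N b) ⊆ Finset.Icc b (b + r - 1))
    (hwrap : b + N ≤ b' + r' - 1) : (B : Set ℤ) ⊆ Set.Ico b b' := by
  intro x hx
  rw [Finset.mem_coe] at hx
  have hx1N := Finset.mem_Icc.mp (hB hx)
  have hcut := Finset.mem_Icc.mp (hBb (Finset.mem_image_of_mem _ hx))
  rw [Set.mem_Ico]
  unfold cutN at hcut
  split_ifs at hcut <;> omega

lemma image_cutN_eq_or_of_le {N b b' r r' : ℤ} {B B' : Finset ℤ} (hB : B ⊆ Finset.Icc 1 N)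
    (hb'N : b' ≤ N) (hrr' : r + r' ≤ N + 1)
    (hBb : B.image (cutN N b) ⊆ Finset.Icc b (b + r - 1))
    (hB'b' : B'.image (cutN N b') ⊆ Finset.Icc b' (b' + r' - 1)) (hbb' : b ≤ b') :
    B'.image (cutN N b) = B'.image (cutN N b') ∨
      B.image (cutN N b') = (B.image (cutN N b)).image (· + N) := by
  by_cases hmiss : ∀ y ∈ B', y ∉ Set.Ico b b'
  · exact Or.inl (image_cutN_eq_of_forall_notMem_Ico hbb' hmiss)
  push Not at hmiss
  obtain ⟨y, hy, hyb⟩ := hmiss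
  have hlift := Finset.mem_Icc.mp (hB'b' (Finset.mem_image_of_mem _ hy))
  rw [cutN_eq_cutN_add_of_mem_Ico (N := N) hyb, cutN, if_pos hyb.1] at hlift
  exact Or.inr (image_cutN_eq_image_add_of_subset_Ico
    (subset_Ico_of_window_wraps hB hb'N hrr' hBb (by linarith [hyb.1])))

theorem simultaneous_cut_general (N : ℤ) (B B' : Finset ℤ)
    (hB : B ⊆ Finset.Icc 1 N) (hB' : B' ⊆ Finset.Icc 1 N)
    (h2 : 2 * rN N B ≤ N + 1)
    (h2' : 2 * rN N B' ≤ N + 1)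
    (b : ℤ) (hbmem : b ∈ B)
    (hb2 : B ⊆ (Finset.Icc b (b + rN N B - 1)).image (projN N))
    (b' : ℤ) (hb'mem : b' ∈ B')
    (hb'2 : B' ⊆ (Finset.Icc b' (b' + rN N B' - 1)).image (projN N)) :
    (∃ n : ℤ, (n = 0 ∨ n = 1) ∧
        B'.image (cutN N b) = (B'.image (cutN N b')).image (fun x => x + n * N)) ∨
      (∃ m : ℤ, (m = 0 ∨ m = 1) ∧
        B.image (cutN N b') = (B.image (cutN N b)).image (fun x => x + m * N)) := by
  have hb := Finset.mem_Icc.mp (hB hbmem)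
  have hb' := Finset.mem_Icc.mp (hB' hb'mem)
  have hBb := image_cutN_subset_Icc hb.1 hb.2 (by omega) hb2
  have hB'b' := image_cutN_subset_Icc hb'.1 hb'.2 (by omega) hb'2
  rcases le_total b b' with hbb' | hb'b
  · rcases image_cutN_eq_or_of_le hB hb'.2 (by omega) hBb hB'b' hbb' with h | h
    · exact Or.inl ⟨0, Or.inl rfl, by simpa using h⟩
    · exact Or.inr ⟨1, Or.inr rfl, by simpa using h⟩
  · rcases image_cutN_eq_or_of_le hB' hb.2 (by omega) hB'b' hBb hb'b with h | h
    · exact Or.inr ⟨0, Or.inl rfl, by simpa using h⟩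
    · exact Or.inl ⟨1, Or.inr rfl, by simpa using h⟩

/-- Lemma S2 of the Supplemental Material: Let
`B, B' ⊆ {1,…,N}` with `1 ≤ r_N(B), r_N(B') ≤ (N+1)/2` and `B ∩ B' ≠ ∅`, and
let `b, b'` be the left-most sites of `B, B'`. Then either
`s_b(B') = s_{b'}(B') + nN` for some `n ∈ {0,1}`, or
`s_{b'}(B) = s_b(B) + mN` for some `m ∈ {0,1}`. -/
theorem simultaneous_cut (N : ℤ) (hN : 1 ≤ N) (B B' : Finset ℤ)
    (hB : B ⊆ Finset.Icc 1 N) (hB' : B' ⊆ Finset.Icc 1 N)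
    (h1 : 1 ≤ rN N B) (h2 : 2 * rN N B ≤ N + 1)
    (h1' : 1 ≤ rN N B') (h2' : 2 * rN N B' ≤ N + 1)
    (hint : (B ∩ B').Nonempty)
    (b : ℤ) (hbmem : b ∈ B) (hb1 : projN N (b + rN N B - 1) ∈ B)
    (hb2 : B ⊆ (Finset.Icc b (b + rN N B - 1)).image (projN N))
    (b' : ℤ) (hb'mem : b' ∈ B') (hb'1 : projN N (b' + rN N B' - 1) ∈ B')
    (hb'2 : B' ⊆ (Finset.Icc b' (b' + rN N B' - 1)).image (projN N)) :
    (∃ n : ℤ, (n = 0 ∨ n = 1) ∧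
        B'.image (cutN N b) = (B'.image (cutN N b')).image (fun x => x + n * N)) ∨
      (∃ m : ℤ, (m = 0 ∨ m = 1) ∧
        B.image (cutN N b') = (B.image (cutN N b)).image (fun x => x + m * N)) :=
  simultaneous_cut_general N B B' hB hB' h2 h2' b hbmem hb2 b' hb'mem hb'2
end

section
/- Let A ⊆ {1,…,N} be nonempty and let C, C' ⊆ ℤ be finite subsets with C ∩ C' ≠ ∅, r(C) ≤ (N+1)/2 and r(C') ≤ (N+1)/2. Then there exists at most one a ∈ A such that the symmetric difference C △ C' is a proper subset of s_a(A) and s_a(A) ⊆ C ∪ C'. (The uniqueness claim in Step 1 of the proof of the locality theorem in the Supplemental Material.) -/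
/-!
Since `C` and `C'` share a point and each has range at most `(N + 1) / 2`, any two points of
`C ∪ C'` differ by less than `N`. But if `a < b` both had `s_a(A), s_b(A) ⊆ C ∪ C'`, then
`a = s_a(a)` and `a + N = s_b(a)` would be two points of `C ∪ C'` at distance `N`.
-/

lemma sub_lt_rng {C : Finset ℤ} {x y : ℤ} (hx : x ∈ C) (hy : y ∈ C) : x - y < rng C := by
  rw [rng, dif_pos ⟨x, hx⟩]
  have := C.le_max' x hx
  have := C.min'_le y hy
  omega

lemma sub_lt_two_mul_max_rng {C C' : Finset ℤ} {p x y : ℤ} (hp : p ∈ C ∩ C')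
    (hx : x ∈ C ∪ C') (hy : y ∈ C ∪ C') : x - y < 2 * max (rng C) (rng C') - 1 := by
  obtain ⟨hpC, hpC'⟩ := Finset.mem_inter.1 hp
  have hxp : x - p < max (rng C) (rng C') := by
    rcases Finset.mem_union.1 hx with h | h
    · exact lt_max_of_lt_left (sub_lt_rng h hpC)
    · exact lt_max_of_lt_right (sub_lt_rng h hpC')
  have hpy : p - y < max (rng C) (rng C') := by
    rcases Finset.mem_union.1 hy with h | h
    · exact lt_max_of_lt_left (sub_lt_rng hpC h)
    · exact lt_max_of_lt_right (sub_lt_rng hpC' h)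
  omega

lemma cutN_self (N a : ℤ) : cutN N a a = a := if_pos le_rfl

lemma cutN_of_lt {N n i : ℤ} (h : i < n) : cutN N n i = i + N := if_neg (not_le.2 h)

lemma not_lt_of_image_cutN_subset {N a b : ℤ} {A S : Finset ℤ}
    (hS : ∀ x ∈ S, ∀ y ∈ S, x - y < N) (ha : a ∈ A)
    (hSa : A.image (cutN N a) ⊆ S) (hSb : A.image (cutN N b) ⊆ S) : ¬ a < b := by
  intro hab
  have h₁ : a ∈ S := hSa (Finset.mem_image.2 ⟨a, ha, cutN_self N a⟩)
  have h₂ : a + N ∈ S := hSb (Finset.mem_image.2 ⟨a, ha, cutN_of_lt hab⟩)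
  have := hS _ h₂ _ h₁
  omega

lemma eq_of_image_cutN_subset {N a b : ℤ} {A S : Finset ℤ}
    (hS : ∀ x ∈ S, ∀ y ∈ S, x - y < N) (ha : a ∈ A) (hb : b ∈ A)
    (hSa : A.image (cutN N a) ⊆ S) (hSb : A.image (cutN N b) ⊆ S) : a = b :=
  le_antisymm (not_lt.1 (not_lt_of_image_cutN_subset hS hb hSb hSa))
    (not_lt.1 (not_lt_of_image_cutN_subset hS ha hSa hSb))

theorem unique_cut_site_general (N : ℤ)
    (A : Finset ℤ)
    (C C' : Finset ℤ) (hCC' : (C ∩ C').Nonempty)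
    (hC : 2 * rng C ≤ N + 1) (hC' : 2 * rng C' ≤ N + 1) :
    ∀ a₁ ∈ A, ∀ a₂ ∈ A,
      ((C ∪ C') \ (C ∩ C') ⊂ A.image (cutN N a₁) ∧ A.image (cutN N a₁) ⊆ C ∪ C') →
      ((C ∪ C') \ (C ∩ C') ⊂ A.image (cutN N a₂) ∧ A.image (cutN N a₂) ⊆ C ∪ C') →
      a₁ = a₂ := by
  obtain ⟨p, hp⟩ := hCC'
  have hS : ∀ x ∈ C ∪ C', ∀ y ∈ C ∪ C', x - y < N := fun x hx y hy => by
    have := sub_lt_two_mul_max_rng hp hx hy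
    omega
  intro a₁ h₁ a₂ h₂ hc₁ hc₂
  exact eq_of_image_cutN_subset hS h₁ h₂ hc₁.2 hc₂.2

/-- uniqueness claim in Step 1 of the locality theorem: For
nonempty `A ⊆ {1,…,N}` and finite `C, C' ⊆ ℤ` with `C ∩ C' ≠ ∅` and
`r(C), r(C') ≤ (N+1)/2`, there is at most one `a ∈ A` with
`C △ C' ⊊ s_a(A) ⊆ C ∪ C'`. -/
theorem unique_cut_site (N : ℤ) (hN : 1 ≤ N)
    (A : Finset ℤ) (hAne : A.Nonempty) (hA : A ⊆ Finset.Icc 1 N)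
    (C C' : Finset ℤ) (hCC' : (C ∩ C').Nonempty)
    (hC : 2 * rng C ≤ N + 1) (hC' : 2 * rng C' ≤ N + 1) :
    ∀ a₁ ∈ A, ∀ a₂ ∈ A,
      ((C ∪ C') \ (C ∩ C') ⊂ A.image (cutN N a₁) ∧ A.image (cutN N a₁) ⊆ C ∪ C') →
      ((C ∪ C') \ (C ∩ C') ⊂ A.image (cutN N a₂) ∧ A.image (cutN N a₂) ⊆ C ∪ C') →
      a₁ = a₂ :=
  unique_cut_site_general N A C C' hCC' hC hC'
end
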